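/- arXiv:2003.08830 — 2 statements merged into one kernel-verified Lean document; each statement's English description precedes it below -/
import Mathlib

section
/- (Multiple-root characterization.) Let s₀ = σ₀ + iω₀ with ω₀ ≥ 0 and let h₀ be a real number such that 1 + G(s₀)·e^{−h₀·s₀} = 0. Then s₀ is a characteristic root of multiplicity more than one at h₀, i.e. G′(s₀) − h₀·G(s₀) = 0, if and only if H′(ω₀) = 0 and φ′(ω₀) = 0; moreover in this situation necessarily h₀ = H(ω₀). -/
open Complex Real Filter Finset Set

/-!
Write `L = G'(s₀) / G(s₀)`; the characteristic equation forces `G(s₀) ≠ 0`, so the double-root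
condition `G'(s₀) = h₀ G(s₀)` says exactly `L = h₀`. On the line `Re s = σ₀` the real part of `L`
is `Θ'(ω)` (termwise, `Re (s - z)⁻¹` is the derivative of the arctangent) and the imaginary part is
`-σ₀ H'(ω)` (Cauchy–Riemann for `log |G|`). So `L = h₀` means `H'(ω₀) = 0` and `Θ'(ω₀) = h₀`.
Taking moduli in the characteristic equation gives `h₀ = H(ω₀)`, and since
`φ' = Θ' - H - ω H'`, the second condition becomes `φ'(ω₀) = 0`.
-/

section VerticalLine

variable (σ ω a b : ℝ)

lemma vertical_sub_eq :
    (σ + ω * I : ℂ) - (a + b * I) = ((σ - a : ℝ) : ℂ) + ((ω - b : ℝ) : ℂ) * I := by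
  push_cast; ring

lemma re_inv_vertical_sub :
    ((σ + ω * I : ℂ) - (a + b * I))⁻¹.re = (σ - a) / ((σ - a) ^ 2 + (ω - b) ^ 2) := by
  rw [vertical_sub_eq, inv_re, normSq_add_mul_I]
  simp

variable {σ a}

lemma vertical_sub_ne_zero (h : a ≠ σ) : (σ + ω * I : ℂ) - (a + b * I) ≠ 0 := by
  rw [vertical_sub_eq]
  intro h0
  have : σ - a = 0 := by simpa using congrArg re h0
  exact h (sub_eq_zero.mp this).symm

lemma hasDerivAt_arctan_div_sub (h : a ≠ σ) :
    HasDerivAt (fun t => Real.arctan ((t - b) / (σ - a)))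
      ((σ + ω * I : ℂ) - (a + b * I))⁻¹.re ω := by
  have hσa : σ - a ≠ 0 := sub_ne_zero.mpr h.symm
  rw [re_inv_vertical_sub]
  refine ((hasDerivAt_arctan _).comp ω
    (((hasDerivAt_id ω).sub_const b).div_const (σ - a))).congr_deriv ?_
  simp only [id]
  field_simp

end VerticalLine

theorem HasDerivAt.log_norm_comp_vertical {f : ℂ → ℂ} {f' : ℂ} {σ ω : ℝ}
    (hf : HasDerivAt f f' (σ + ω * I)) (hf0 : f (σ + ω * I) ≠ 0) :
    HasDerivAt (fun t : ℝ => Real.log ‖f (σ + t * I)‖) (-(f' / f (σ + ω * I)).im) ω := by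
  have hvert : HasDerivAt (fun t : ℂ => σ + t * I) I ω := by
    simpa using ((hasDerivAt_id (ω : ℂ)).mul_const I).const_add (σ : ℂ)
  have hline : HasDerivAt (fun t : ℂ => f (σ + t * I)) (f' * I) ω := hf.comp_of_eq _ hvert rfl
  -- `log ‖w‖ = log (‖w‖ ^ 2) / 2` sidesteps the branch cut of `Complex.log`
  have hsq := (hline.comp_ofReal.norm_sq).log (by simpa using hf0)
  have hlog : (fun t : ℝ => Real.log ‖f (σ + t * I)‖)
      = fun t : ℝ => Real.log (‖f (σ + t * I)‖ ^ 2) / 2 := by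
    funext t; rw [Real.log_pow]; push_cast; ring
  rw [hlog]
  refine (hsq.div_const 2).congr_deriv ?_
  rw [Complex.inner, ← normSq_eq_norm_sq, div_eq_mul_inv f', inv_def]
  have : normSq (f (σ + ω * I)) ≠ 0 := by simpa using hf0
  simp only [mul_re, mul_im, I_re, I_im, conj_re, conj_im, ofReal_re, ofReal_im]
  field_simp
  ring

lemma logDeriv_const_mul_prod_div_prod {ι κ : Type*} [Fintype ι] [Fintype κ] {c : ℂ} (hc : c ≠ 0)
    (z : ι → ℂ) (p : κ → ℂ) {s : ℂ} (hz : ∀ k, s - z k ≠ 0) (hp : ∀ i, s - p i ≠ 0) :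
    logDeriv (fun s => c * (∏ k, (s - z k)) / ∏ i, (s - p i)) s
      = ∑ k, (s - z k)⁻¹ - ∑ i, (s - p i)⁻¹ := by
  have hfac : ∀ w : ℂ, logDeriv (fun s => s - w) s = (s - w)⁻¹ := fun w => by
    simp [logDeriv_apply]
  have hzd : ∀ k ∈ Finset.univ, DifferentiableAt ℂ (fun s => s - z k) s := by fun_prop
  have hpd : ∀ i ∈ Finset.univ, DifferentiableAt ℂ (fun s => s - p i) s := by fun_prop
  rw [logDeriv_div (f := fun s => c * ∏ k, (s - z k)) (g := fun s => ∏ i, (s - p i)) _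
    (mul_ne_zero hc (prod_ne_zero_iff.mpr fun k _ => hz k)) (prod_ne_zero_iff.mpr fun i _ => hp i)
    (by fun_prop) (by fun_prop),
    logDeriv_const_mul _ _ hc, logDeriv_prod (fun k _ => hz k) hzd,
    logDeriv_prod (fun i _ => hp i) hpd]
  simp only [hfac]

lemma log_norm_eq_of_one_add_mul_exp_eq_zero {w s : ℂ} {h : ℝ}
    (hchar : 1 + w * exp (-(h : ℂ) * s) = 0) : Real.log ‖w‖ = h * s.re := by
  have hw : w = -exp ((h : ℂ) * s) := by
    have he : exp (-(h : ℂ) * s) * exp ((h : ℂ) * s) = 1 := by rw [← Complex.exp_add]; simp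
    linear_combination exp ((h : ℂ) * s) * hchar - w * he
  rw [hw, norm_neg, norm_exp, Real.log_exp]
  simp

theorem stmt_13_general
    (m n : ℕ) (kG : ℝ) (hkG : kG ≠ 0)
    (σz ωz : Fin m → ℝ) (σp ωp : Fin n → ℝ)
    (σ0 : ℝ) (hσ0 : σ0 < 0)
    (hz : ∀ k, σz k ≠ σ0) (hp : ∀ i, σp i ≠ σ0)
    (G : ℂ → ℂ)
    (hG : ∀ s : ℂ, G s =
      (kG : ℂ) * (∏ k : Fin m, (s - ((σz k : ℂ) + (ωz k : ℂ) * Complex.I))) /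
        (∏ i : Fin n, (s - ((σp i : ℂ) + (ωp i : ℂ) * Complex.I))))
    (H : ℝ → ℝ)
    (hH : ∀ ω : ℝ, H ω = Real.log ‖G ((σ0 : ℂ) + (ω : ℂ) * Complex.I)‖ / σ0)
    (Θ : ℝ → ℝ)
    (hΘ : ∀ ω : ℝ, Θ ω =
      (∑ k : Fin m, Real.arctan ((ω - ωz k) / (σ0 - σz k)))
        - ∑ i : Fin n, Real.arctan ((ω - ωp i) / (σ0 - σp i)))
    (φ : ℝ → ℝ) (hφ : ∀ ω : ℝ, φ ω = Θ ω - ω * H ω)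
    (ω0 h0 : ℝ) (s0 : ℂ) (hs0 : s0 = (σ0 : ℂ) + (ω0 : ℂ) * Complex.I)
    (hchar : 1 + G s0 * Complex.exp (-(h0 : ℂ) * s0) = 0)
    : (deriv G s0 - (h0 : ℂ) * G s0 = 0 ↔ deriv H ω0 = 0 ∧ deriv φ ω0 = 0) ∧
      (deriv G s0 - (h0 : ℂ) * G s0 = 0 → h0 = H ω0) := by
  subst hs0
  have hGs0 : G (σ0 + ω0 * I) ≠ 0 := by rintro h; simp [h] at hchar
  have hzs := fun k => vertical_sub_ne_zero ω0 (ωz k) (hz k)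
  have hps := fun i => vertical_sub_ne_zero ω0 (ωp i) (hp i)
  set L := logDeriv G (σ0 + ω0 * I) with hL
  have hLsum : L = ∑ k, ((σ0 + ω0 * I : ℂ) - (σz k + ωz k * I))⁻¹
      - ∑ i, ((σ0 + ω0 * I : ℂ) - (σp i + ωp i * I))⁻¹ := by
    rw [hL, funext hG]
    exact logDeriv_const_mul_prod_div_prod (ofReal_ne_zero.mpr hkG) _ _ hzs hps
  have hGd : DifferentiableAt ℂ G (σ0 + ω0 * I) := by
    rw [funext hG]
    exact DifferentiableAt.div (by fun_prop) (by fun_prop) (prod_ne_zero_iff.mpr fun i _ => hps i)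
  have hderiv : deriv G (σ0 + ω0 * I) = L * G (σ0 + ω0 * I) := (div_mul_cancel₀ _ hGs0).symm
  have hH' : HasDerivAt H (-L.im / σ0) ω0 := by
    rw [funext hH]
    exact (hGd.hasDerivAt.log_norm_comp_vertical hGs0).div_const σ0
  have hΘ' : HasDerivAt Θ L.re ω0 := by
    rw [funext hΘ, hLsum, sub_re, re_sum, re_sum]
    exact (HasDerivAt.fun_sum fun k _ => hasDerivAt_arctan_div_sub _ _ (hz k)).sub
      (HasDerivAt.fun_sum fun i _ => hasDerivAt_arctan_div_sub _ _ (hp i))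
  have hφ' : HasDerivAt φ (L.re - (H ω0 + ω0 * (-L.im / σ0))) ω0 := by
    rw [funext hφ]
    simpa using hΘ'.fun_sub ((hasDerivAt_id' ω0).fun_mul hH')
  have hh0 : h0 = H ω0 := by
    rw [hH, log_norm_eq_of_one_add_mul_exp_eq_zero hchar]
    simp [hσ0.ne]
  have hroot : deriv G (σ0 + ω0 * I) - h0 * G (σ0 + ω0 * I) = 0 ↔ L = h0 := by
    rw [hderiv, ← sub_mul, mul_eq_zero, sub_eq_zero, or_iff_left hGs0]
  refine ⟨?_, fun _ => hh0⟩
  rw [hroot, hH'.deriv, hφ'.deriv, Complex.ext_iff, ofReal_re, ofReal_im, ← hh0]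
  constructor
  · rintro ⟨hre, him⟩
    simp [hre, him]
  · rintro ⟨hH0, hφ0⟩
    have him : L.im = 0 := by simpa [hσ0.ne] using hH0
    exact ⟨by simpa [him, sub_eq_zero] using hφ0, him⟩

theorem stmt_13
    (m n : ℕ) (kG : ℝ) (hkG : kG ≠ 0)
    (σz ωz : Fin m → ℝ) (σp ωp : Fin n → ℝ)
    (σ0 : ℝ) (hσ0 : σ0 < 0)
    (hz : ∀ k, σz k ≠ σ0) (hp : ∀ i, σp i ≠ σ0)
    (G : ℂ → ℂ)
    (hG : ∀ s : ℂ, G s =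
      (kG : ℂ) * (∏ k : Fin m, (s - ((σz k : ℂ) + (ωz k : ℂ) * Complex.I))) /
        (∏ i : Fin n, (s - ((σp i : ℂ) + (ωp i : ℂ) * Complex.I))))
    (γz : Fin m → ℝ → ℝ)
    (hγz : ∀ (k : Fin m) (ω : ℝ), γz k ω = (σ0 - σz k) ^ 2 + (ω - ωz k) ^ 2)
    (γp : Fin n → ℝ → ℝ)
    (hγp : ∀ (i : Fin n) (ω : ℝ), γp i ω = (σ0 - σp i) ^ 2 + (ω - ωp i) ^ 2)
    (H : ℝ → ℝ)
    (hH : ∀ ω : ℝ, H ω = Real.log ‖G ((σ0 : ℂ) + (ω : ℂ) * Complex.I)‖ / σ0)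
    (Θ : ℝ → ℝ)
    (hΘ : ∀ ω : ℝ, Θ ω =
      (∑ k : Fin m, Real.arctan ((ω - ωz k) / (σ0 - σz k)))
        - ∑ i : Fin n, Real.arctan ((ω - ωp i) / (σ0 - σp i)))
    (φ : ℝ → ℝ) (hφ : ∀ ω : ℝ, φ ω = Θ ω - ω * H ω)
    (ω0 h0 : ℝ) (hω0 : 0 ≤ ω0) (s0 : ℂ) (hs0 : s0 = (σ0 : ℂ) + (ω0 : ℂ) * Complex.I)
    (hchar : 1 + G s0 * Complex.exp (-(h0 : ℂ) * s0) = 0)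
    : (deriv G s0 - (h0 : ℂ) * G s0 = 0 ↔ deriv H ω0 = 0 ∧ deriv φ ω0 = 0) ∧
      (deriv G s0 - (h0 : ℂ) * G s0 = 0 → h0 = H ω0) :=
  stmt_13_general m n kG hkG σz ωz σp ωp σ0 hσ0 hz hp G hG H hH Θ hΘ φ hφ ω0 h0 s0 hs0 hchar
end

section
/- (Bi-proper asymptotics.) Suppose m = n (the plant is bi-proper, with high-frequency gain d = k_G). Then H(ω) → ln|k_G| / σ₀ and σ₀·φ′(ω) → −ln|k_G| = ln(1/|k_G|) as ω → +∞. -/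
/-!
On the line `s = σ₀ + iω` one has `log |s - z| = ½ log γ(ω)` with
`γ(ω) = (σ₀ - Re z)² + (ω - Im z)²`, so `σ₀ H = log |k_G| + ½ ∑ (log γ_z - log γ_p)`.
Every `γ(ω) / ω²` tends to `1`, so when `m = n` each paired difference `log γ_z - log γ_p`
tends to `0`, which gives the limit of `H`. Differentiating, `φ' = Θ' - H - ω H'`: the terms
of `Θ'` are `c / γ → 0`, and `σ₀ ω H'` is a sum of `ω (ω - Im z) / γ_z - ω (ω - Im p) / γ_p`,
each tending to `1 - 1`. Hence `σ₀ φ' → -log |k_G|`.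
-/

open Complex Real Filter Finset Set
open Topology

theorem ofReal_add_mul_I_sub_ne_zero {σ0 σ : ℝ} (h : σ ≠ σ0) (ω a : ℝ) :
    (σ0 : ℂ) + ω * I - (σ + a * I) ≠ 0 := fun h0 =>
  h (by simpa [sub_eq_zero, eq_comm] using congrArg re h0)

theorem log_norm_sub (σ0 ω σ a : ℝ) :
    Real.log ‖(σ0 : ℂ) + ω * I - (σ + a * I)‖ = Real.log ((σ0 - σ) ^ 2 + (ω - a) ^ 2) / 2 := by
  rw [Complex.norm_def, Real.log_sqrt (normSq_nonneg _), normSq_apply]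
  simp [sq]

theorem log_norm_prod_sub {ι : Type*} [Fintype ι] (σ0 ω : ℝ) (σ a : ι → ℝ)
    (hσ : ∀ k, σ k ≠ σ0) :
    Real.log ‖∏ k, ((σ0 : ℂ) + ω * I - (σ k + a k * I))‖ =
      (∑ k, Real.log ((σ0 - σ k) ^ 2 + (ω - a k) ^ 2)) / 2 := by
  rw [norm_prod, Real.log_prod fun k _ =>
    norm_ne_zero_iff.2 (ofReal_add_mul_I_sub_ne_zero (hσ k) ω (a k)), Finset.sum_div]
  exact Finset.sum_congr rfl fun k _ => log_norm_sub σ0 ω (σ k) (a k)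

theorem log_norm_mul_prod_div_prod {ι κ : Type*} [Fintype ι] [Fintype κ] {k : ℝ} (hk : k ≠ 0)
    (σ0 ω : ℝ) (σz az : ι → ℝ) (σp ap : κ → ℝ) (hz : ∀ i, σz i ≠ σ0) (hp : ∀ j, σp j ≠ σ0) :
    Real.log ‖(k : ℂ) * (∏ i, ((σ0 : ℂ) + ω * I - (σz i + az i * I))) /
        ∏ j, ((σ0 : ℂ) + ω * I - (σp j + ap j * I))‖ =
      Real.log |k| + (∑ i, Real.log ((σ0 - σz i) ^ 2 + (ω - az i) ^ 2)) / 2 -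
        (∑ j, Real.log ((σ0 - σp j) ^ 2 + (ω - ap j) ^ 2)) / 2 := by
  have hP := Finset.prod_ne_zero_iff.2 fun i (_ : i ∈ Finset.univ) =>
    ofReal_add_mul_I_sub_ne_zero (hz i) ω (az i)
  have hQ := Finset.prod_ne_zero_iff.2 fun j (_ : j ∈ Finset.univ) =>
    ofReal_add_mul_I_sub_ne_zero (hp j) ω (ap j)
  rw [norm_div, norm_mul, norm_real, Real.norm_eq_abs,
    Real.log_div (mul_ne_zero (abs_ne_zero.2 hk) (norm_ne_zero_iff.2 hP)) (norm_ne_zero_iff.2 hQ),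
    Real.log_mul (abs_ne_zero.2 hk) (norm_ne_zero_iff.2 hP), log_norm_prod_sub σ0 ω σz az hz,
    log_norm_prod_sub σ0 ω σp ap hp]

section Asymptotics

variable (c a : ℝ)

theorem tendsto_sq_add_sub_sq_div_sq :
    Tendsto (fun ω => (c ^ 2 + (ω - a) ^ 2) / ω ^ 2) atTop (𝓝 1) := by
  have h : Tendsto (fun t : ℝ => c ^ 2 * t ^ 2 + (1 - a * t) ^ 2) (𝓝 0) (𝓝 1) := by
    simpa using (by fun_prop : Continuous fun t : ℝ => c ^ 2 * t ^ 2 + (1 - a * t) ^ 2).tendsto 0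
  refine (h.comp tendsto_inv_atTop_zero).congr' ?_
  filter_upwards [eventually_ne_atTop 0] with ω hω
  simp only [Function.comp_apply]
  field_simp

theorem tendsto_div_sq_add_sub_sq (b : ℝ) :
    Tendsto (fun ω => b / (c ^ 2 + (ω - a) ^ 2)) atTop (𝓝 0) := by
  have hsub : Tendsto (fun ω : ℝ => ω - a) atTop atTop :=
    tendsto_atTop_add_const_right _ _ tendsto_id
  have hγ : Tendsto (fun ω : ℝ => c ^ 2 + (ω - a) ^ 2) atTop atTop :=
    tendsto_atTop_add_const_left _ _ ((tendsto_pow_atTop two_ne_zero).comp hsub)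
  simpa [div_eq_mul_inv] using hγ.inv_tendsto_atTop.const_mul b

theorem tendsto_mul_sub_div_sq_add_sub_sq :
    Tendsto (fun ω => ω * (ω - a) / (c ^ 2 + (ω - a) ^ 2)) atTop (𝓝 1) := by
  have h : Tendsto (fun ω : ℝ => 1 - a * ω⁻¹) atTop (𝓝 1) := by
    simpa using (tendsto_inv_atTop_zero.const_mul a).const_sub 1
  have hq := h.div (tendsto_sq_add_sub_sq_div_sq c a) one_ne_zero
  rw [div_one] at hq
  refine hq.congr' ?_
  filter_upwards [eventually_ne_atTop 0] with ω hω
  simp only [Pi.div_apply]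
  field_simp

theorem tendsto_log_sq_add_sub_sq_sub_log (c' a' : ℝ) :
    Tendsto (fun ω => Real.log (c ^ 2 + (ω - a) ^ 2) - Real.log (c' ^ 2 + (ω - a') ^ 2))
      atTop (𝓝 0) := by
  have hratio :=
    (tendsto_sq_add_sub_sq_div_sq c a).div (tendsto_sq_add_sub_sq_div_sq c' a') one_ne_zero
  rw [div_one] at hratio
  have hlog := (continuousAt_log one_ne_zero).tendsto.comp hratio
  rw [Real.log_one] at hlog
  refine hlog.congr' ?_
  filter_upwards [eventually_gt_atTop a, eventually_gt_atTop a', eventually_ne_atTop 0]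
    with ω ha ha' hω
  have hpos : 0 < c ^ 2 + (ω - a) ^ 2 := by nlinarith
  have hpos' : 0 < c' ^ 2 + (ω - a') ^ 2 := by nlinarith
  rw [Function.comp_apply, Pi.div_apply, div_div_div_cancel_right₀ (by positivity),
    Real.log_div hpos.ne' hpos'.ne']

end Asymptotics

theorem hasDerivAt_arctan_sub_div {c : ℝ} (hc : c ≠ 0) (a ω : ℝ) :
    HasDerivAt (fun ω => Real.arctan ((ω - a) / c)) (c / (c ^ 2 + (ω - a) ^ 2)) ω := by
  refine ((Real.hasDerivAt_arctan _).comp ω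
    (((hasDerivAt_id' ω).sub_const a).div_const c)).congr_deriv ?_
  field_simp

theorem hasDerivAt_log_sq_add_sub_sq {c : ℝ} (hc : c ≠ 0) (a ω : ℝ) :
    HasDerivAt (fun ω => Real.log (c ^ 2 + (ω - a) ^ 2))
      (2 * (ω - a) / (c ^ 2 + (ω - a) ^ 2)) ω := by
  have h := (((hasDerivAt_id ω).sub_const a).pow 2).const_add (c ^ 2)
  simpa using h.log (add_pos_of_pos_of_nonneg (sq_pos_of_ne_zero hc) (sq_nonneg _)).ne'

/-- The contribution to `φ` of the zero `σ0 - c₁ + a₁ i` paired with the pole `σ0 - c₂ + a₂ i`;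
when `m = n`, `φ` is the sum of these minus `ω log |k_G| / σ0`. -/
noncomputable def pairPhase (σ0 c₁ a₁ c₂ a₂ ω : ℝ) : ℝ :=
  Real.arctan ((ω - a₁) / c₁) - Real.arctan ((ω - a₂) / c₂) -
    ω * ((Real.log (c₁ ^ 2 + (ω - a₁) ^ 2) - Real.log (c₂ ^ 2 + (ω - a₂) ^ 2)) / 2 / σ0)

section PairPhase

variable (σ0 : ℝ) {c₁ c₂ : ℝ} (a₁ a₂ : ℝ)

theorem hasDerivAt_pairPhase (hc₁ : c₁ ≠ 0) (hc₂ : c₂ ≠ 0) (ω : ℝ) :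
    HasDerivAt (pairPhase σ0 c₁ a₁ c₂ a₂)
      (c₁ / (c₁ ^ 2 + (ω - a₁) ^ 2) - c₂ / (c₂ ^ 2 + (ω - a₂) ^ 2) -
        ((Real.log (c₁ ^ 2 + (ω - a₁) ^ 2) - Real.log (c₂ ^ 2 + (ω - a₂) ^ 2)) / 2 / σ0 +
          (ω * (ω - a₁) / (c₁ ^ 2 + (ω - a₁) ^ 2) - ω * (ω - a₂) / (c₂ ^ 2 + (ω - a₂) ^ 2)) /
            σ0))
      ω := by
  have hlog := (((hasDerivAt_log_sq_add_sub_sq hc₁ a₁ ω).fun_sub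
    (hasDerivAt_log_sq_add_sub_sq hc₂ a₂ ω)).div_const 2).div_const σ0
  refine (((hasDerivAt_arctan_sub_div hc₁ a₁ ω).fun_sub
    (hasDerivAt_arctan_sub_div hc₂ a₂ ω)).fun_sub ((hasDerivAt_id' ω).fun_mul hlog)).congr_deriv ?_
  ring

theorem differentiable_pairPhase (hc₁ : c₁ ≠ 0) (hc₂ : c₂ ≠ 0) :
    Differentiable ℝ (pairPhase σ0 c₁ a₁ c₂ a₂) := fun ω =>
  (hasDerivAt_pairPhase σ0 a₁ a₂ hc₁ hc₂ ω).differentiableAt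

theorem tendsto_deriv_pairPhase (hc₁ : c₁ ≠ 0) (hc₂ : c₂ ≠ 0) :
    Tendsto (deriv (pairPhase σ0 c₁ a₁ c₂ a₂)) atTop (𝓝 0) := by
  have h := ((tendsto_div_sq_add_sub_sq c₁ a₁ c₁).sub (tendsto_div_sq_add_sub_sq c₂ a₂ c₂)).sub
    ((((tendsto_log_sq_add_sub_sq_sub_log c₁ a₁ c₂ a₂).div_const 2).div_const σ0).add
      (((tendsto_mul_sub_div_sq_add_sub_sq c₁ a₁).sub
        (tendsto_mul_sub_div_sq_add_sub_sq c₂ a₂)).div_const σ0))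
  simp only [sub_self, zero_div, add_zero] at h
  exact h.congr fun ω => (hasDerivAt_pairPhase σ0 a₁ a₂ hc₁ hc₂ ω).deriv.symm

end PairPhase

theorem tendsto_deriv_sum_pairPhase_sub_mul {ι : Type*} [Fintype ι] (σ0 L : ℝ)
    (c₁ a₁ c₂ a₂ : ι → ℝ) (hc₁ : ∀ k, c₁ k ≠ 0) (hc₂ : ∀ k, c₂ k ≠ 0) :
    Tendsto (deriv fun ω => ∑ k, pairPhase σ0 (c₁ k) (a₁ k) (c₂ k) (a₂ k) ω - ω * L)
      atTop (𝓝 (-L)) := by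
  have hderiv : ∀ ω,
      deriv (fun ω => ∑ k, pairPhase σ0 (c₁ k) (a₁ k) (c₂ k) (a₂ k) ω - ω * L) ω =
        ∑ k, deriv (pairPhase σ0 (c₁ k) (a₁ k) (c₂ k) (a₂ k)) ω - L := fun ω => by
    simpa using ((HasDerivAt.fun_sum fun k _ => (differentiable_pairPhase σ0 (a₁ k) (a₂ k)
      (hc₁ k) (hc₂ k) ω).hasDerivAt).fun_sub ((hasDerivAt_id ω).mul_const L)).deriv
  have h := (tendsto_finsetSum Finset.univ fun k _ =>
    tendsto_deriv_pairPhase σ0 (a₁ k) (a₂ k) (hc₁ k) (hc₂ k)).sub_const L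
  rw [sum_const_zero, zero_sub] at h
  exact h.congr fun ω => (hderiv ω).symm

theorem stmt_16_general
    (m n : ℕ) (kG : ℝ) (hkG : kG ≠ 0)
    (σz ωz : Fin m → ℝ) (σp ωp : Fin n → ℝ)
    (σ0 : ℝ) (hσ0 : σ0 < 0)
    (hz : ∀ k, σz k ≠ σ0) (hp : ∀ i, σp i ≠ σ0)
    (G : ℂ → ℂ)
    (hG : ∀ s : ℂ, G s =
      (kG : ℂ) * (∏ k : Fin m, (s - ((σz k : ℂ) + (ωz k : ℂ) * Complex.I))) /
        (∏ i : Fin n, (s - ((σp i : ℂ) + (ωp i : ℂ) * Complex.I))))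
    (H : ℝ → ℝ)
    (hH : ∀ ω : ℝ, H ω = Real.log (‖G ((σ0 : ℂ) + (ω : ℂ) * Complex.I)‖) / σ0)
    (Θ : ℝ → ℝ)
    (hΘ : ∀ ω : ℝ, Θ ω =
      (∑ k : Fin m, Real.arctan ((ω - ωz k) / (σ0 - σz k)))
        - ∑ i : Fin n, Real.arctan ((ω - ωp i) / (σ0 - σp i)))
    (φ : ℝ → ℝ) (hφ : ∀ ω : ℝ, φ ω = Θ ω - ω * H ω)
    (hmn : m = n)
    : Filter.Tendsto H Filter.atTop (nhds (Real.log |kG| / σ0)) ∧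
      Filter.Tendsto (fun ω => σ0 * deriv φ ω) Filter.atTop (nhds (-Real.log |kG|)) := by
  subst hmn
  have hcz : ∀ k, σ0 - σz k ≠ 0 := fun k => sub_ne_zero.2 (hz k).symm
  have hcp : ∀ k, σ0 - σp k ≠ 0 := fun k => sub_ne_zero.2 (hp k).symm
  have hH' : ∀ ω, H ω = (Real.log |kG| +
      (∑ k, Real.log ((σ0 - σz k) ^ 2 + (ω - ωz k) ^ 2)) / 2 -
        (∑ k, Real.log ((σ0 - σp k) ^ 2 + (ω - ωp k) ^ 2)) / 2) / σ0 := fun ω => by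
    rw [hH, hG, log_norm_mul_prod_div_prod hkG σ0 ω σz ωz σp ωp hz hp]
  refine ⟨?_, ?_⟩
  · have h := tendsto_finsetSum Finset.univ fun k _ =>
      tendsto_log_sq_add_sub_sq_sub_log (σ0 - σz k) (ωz k) (σ0 - σp k) (ωp k)
    have h' := ((h.div_const 2).const_add (Real.log |kG|)).div_const σ0
    simp only [sum_const_zero, zero_div, add_zero] at h'
    refine h'.congr fun ω => ?_
    rw [hH', sum_sub_distrib]
    ring
  · have hφ' : φ = fun ω => ∑ k, pairPhase σ0 (σ0 - σz k) (ωz k) (σ0 - σp k) (ωp k) ω -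
        ω * (Real.log |kG| / σ0) := funext fun ω => by
      simp only [hφ, hΘ, hH', pairPhase, sum_sub_distrib, ← mul_sum, ← sum_div]
      ring
    have h := (tendsto_deriv_sum_pairPhase_sub_mul σ0 (Real.log |kG| / σ0) _ ωz _ ωp
      hcz hcp).const_mul σ0
    rwa [mul_neg, mul_div_cancel₀ _ hσ0.ne, ← hφ'] at h

theorem stmt_16
    (m n : ℕ) (kG : ℝ) (hkG : kG ≠ 0)
    (σz ωz : Fin m → ℝ) (σp ωp : Fin n → ℝ)
    (σ0 : ℝ) (hσ0 : σ0 < 0)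
    (hz : ∀ k, σz k ≠ σ0) (hp : ∀ i, σp i ≠ σ0)
    (G : ℂ → ℂ)
    (hG : ∀ s : ℂ, G s =
      (kG : ℂ) * (∏ k : Fin m, (s - ((σz k : ℂ) + (ωz k : ℂ) * Complex.I))) /
        (∏ i : Fin n, (s - ((σp i : ℂ) + (ωp i : ℂ) * Complex.I))))
    (γz : Fin m → ℝ → ℝ)
    (hγz : ∀ (k : Fin m) (ω : ℝ), γz k ω = (σ0 - σz k) ^ 2 + (ω - ωz k) ^ 2)
    (γp : Fin n → ℝ → ℝ)
    (hγp : ∀ (i : Fin n) (ω : ℝ), γp i ω = (σ0 - σp i) ^ 2 + (ω - ωp i) ^ 2)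
    (H : ℝ → ℝ)
    (hH : ∀ ω : ℝ, H ω = Real.log (‖G ((σ0 : ℂ) + (ω : ℂ) * Complex.I)‖) / σ0)
    (Θ : ℝ → ℝ)
    (hΘ : ∀ ω : ℝ, Θ ω =
      (∑ k : Fin m, Real.arctan ((ω - ωz k) / (σ0 - σz k)))
        - ∑ i : Fin n, Real.arctan ((ω - ωp i) / (σ0 - σp i)))
    (φ : ℝ → ℝ) (hφ : ∀ ω : ℝ, φ ω = Θ ω - ω * H ω)
    (hmn : m = n)
    : Filter.Tendsto H Filter.atTop (nhds (Real.log |kG| / σ0)) ∧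
      Filter.Tendsto (fun ω => σ0 * deriv φ ω) Filter.atTop (nhds (-Real.log |kG|)) :=
  stmt_16_general m n kG hkG σz ωz σp ωp σ0 hσ0 hz hp G hG H hH Θ hΘ φ hφ hmn
end
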